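/- arXiv:2401.09266 — 6 statements merged into one kernel-verified Lean document; each statement's English description precedes it below -/
import Mathlib

section
/- Let Q̂* ∈ Φ_ρ be a minimizer of F̂ over Φ_ρ, and let Q* ∈ ℝ^{N×K} be the matrix consisting of the first K columns of Q̂*. Then Q* ∈ Π, Q* minimizes F over Π, and F(Q*) = F̂(Q̂*); in particular, the minimum of F over Π equals the minimum of F̂ over Φ_ρ. -/
open Finset Real

/-!
Padding `Q ∈ Π` with the slack column `1/N - ∑ⱼ Qᵢⱼ` gives a point of `Φ_ρ` whose first `K`
columns are `Q`, and dropping the last column of a point of `Φ_ρ` gives a point of `Π`. On `Φ_ρ`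
the last column has mass exactly `β_{K+1} = 1 - ρ` and cost `0`, so it contributes nothing to `F̂`,
and `F̂` is `F` of the first `K` columns. Hence a minimizer of `F̂` truncates to a minimizer of `F`.
-/

section SlackColumn

variable {ι : Type*} {K : ℕ}

def partialTransportPolytope [Fintype ι] (a ρ : ℝ) : Set (Matrix ι (Fin K) ℝ) :=
  {Q | (∀ i j, 0 ≤ Q i j) ∧ (∀ i, ∑ j, Q i j ≤ a) ∧ ∑ i, ∑ j, Q i j = ρ}

def slackTransportPolytope [Fintype ι] (a ρ : ℝ) : Set (Matrix ι (Fin (K + 1)) ℝ) :=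
  {Qh | (∀ i j, 0 ≤ Qh i j) ∧ (∀ i, ∑ j, Qh i j = a) ∧ ∑ i, Qh i (Fin.last K) = 1 - ρ}

def padSlack (a : ℝ) (Q : Matrix ι (Fin K) ℝ) : Matrix ι (Fin (K + 1)) ℝ :=
  fun i => Fin.snoc (Q i) (a - ∑ j, Q i j)

@[simp]
lemma padSlack_castSucc (a : ℝ) (Q : Matrix ι (Fin K) ℝ) (i : ι) (j : Fin K) :
    padSlack a Q i j.castSucc = Q i j := by
  simp [padSlack]

@[simp]
lemma padSlack_last (a : ℝ) (Q : Matrix ι (Fin K) ℝ) (i : ι) :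
    padSlack a Q i (Fin.last K) = a - ∑ j, Q i j := by
  simp [padSlack]

lemma submatrix_castSucc_padSlack (a : ℝ) (Q : Matrix ι (Fin K) ℝ) :
    (padSlack a Q).submatrix id Fin.castSucc = Q := by
  ext i j
  simp

lemma sum_castSucc_eq_sub_last (x : Fin (K + 1) → ℝ) :
    ∑ j : Fin K, x j.castSucc = ∑ j, x j - x (Fin.last K) := by
  rw [Fin.sum_univ_castSucc]
  ring

lemma submatrix_castSucc_mem_partialTransportPolytope [Fintype ι] {a ρ : ℝ}
    (ha : Fintype.card ι * a = 1) {Qh : Matrix ι (Fin (K + 1)) ℝ}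
    (hQh : Qh ∈ slackTransportPolytope a ρ) :
    Qh.submatrix id Fin.castSucc ∈ partialTransportPolytope a ρ := by
  obtain ⟨hnonneg, hrow, hlast⟩ := hQh
  simp only [partialTransportPolytope, Set.mem_ofPred_eq, Matrix.submatrix_apply, id,
    sum_castSucc_eq_sub_last (Qh _), hrow]
  refine ⟨fun i j => hnonneg i _, fun i => sub_le_self a (hnonneg i _), ?_⟩
  rw [sum_sub_distrib, hlast, sum_const, card_univ, nsmul_eq_mul, ha]
  ring

lemma padSlack_mem_slackTransportPolytope [Fintype ι] {a ρ : ℝ} (ha : Fintype.card ι * a = 1)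
    {Q : Matrix ι (Fin K) ℝ} (hQ : Q ∈ partialTransportPolytope a ρ) :
    padSlack a Q ∈ slackTransportPolytope a ρ := by
  obtain ⟨hnonneg, hrow, htotal⟩ := hQ
  refine ⟨fun i j => ?_, fun i => ?_, ?_⟩
  · induction j using Fin.lastCases with
    | last => simpa using hrow i
    | cast j => simpa using hnonneg i j
  · simp [Fin.sum_univ_castSucc]
  · rw [Finset.sum_congr rfl fun i _ => padSlack_last a Q i, sum_sub_distrib, htotal, sum_const,
      card_univ, nsmul_eq_mul, ha]

lemma sum_mul_snoc_zero (x : Fin (K + 1) → ℝ) (c : Fin K → ℝ) :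
    ∑ j, x j * Fin.snoc (α := fun _ => ℝ) c 0 j = ∑ j : Fin K, x j.castSucc * c j := by
  simp [Fin.sum_univ_castSucc]

lemma mul_log_div_self (x : ℝ) : x * log (x / x) = 0 := by
  rcases eq_or_ne x 0 with rfl | hx
  · simp
  · simp [div_self hx]

lemma sum_snoc_mul_mul_log_div_snoc [Fintype ι] (Qh : Matrix ι (Fin (K + 1)) ℝ) (lam μ b : ℝ)
    (β : Fin K → ℝ) (hlast : ∑ i, Qh i (Fin.last K) = b) :
    ∑ j, Fin.snoc (α := fun _ => ℝ) (fun _ => lam) μ j *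
        ((∑ i, Qh i j) * log ((∑ i, Qh i j) / Fin.snoc (α := fun _ => ℝ) β b j)) =
      lam * ∑ j : Fin K, (∑ i, Qh i j.castSucc) * log ((∑ i, Qh i j.castSucc) / β j) := by
  rw [Fin.sum_univ_castSucc, mul_sum]
  simp only [Fin.snoc_castSucc, Fin.snoc_last, hlast, mul_log_div_self, mul_zero, add_zero]

end SlackColumn

theorem stmt_0_general
    (N K : ℕ) (hN : 0 < N)
    (ρ lam lamK1 : ℝ)
    (P : Matrix (Fin N) (Fin K) ℝ)
    (Pi : Set (Matrix (Fin N) (Fin K) ℝ))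
    (hPi : Pi = {Q | (∀ i j, 0 ≤ Q i j) ∧ (∀ i, ∑ j, Q i j ≤ 1 / (N : ℝ)) ∧
        ∑ i, ∑ j, Q i j = ρ})
    (F : Matrix (Fin N) (Fin K) ℝ → ℝ)
    (hF : ∀ Q, F Q = (∑ i, ∑ j, Q i j * (-Real.log (P i j))) +
        lam * ∑ j, (∑ i, Q i j) * Real.log ((∑ i, Q i j) / (ρ / (K : ℝ))))
    (C : Matrix (Fin N) (Fin (K + 1)) ℝ)
    (hC : ∀ i, C i = Fin.snoc (fun j => -Real.log (P i j)) 0)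
    (β : Fin (K + 1) → ℝ) (hβ : β = Fin.snoc (fun _ => ρ / (K : ℝ)) (1 - ρ))
    (lamv : Fin (K + 1) → ℝ) (hlamv : lamv = Fin.snoc (fun _ => lam) lamK1)
    (Fhat : Matrix (Fin N) (Fin (K + 1)) ℝ → ℝ)
    (hFhat : ∀ Qh, Fhat Qh = (∑ i, ∑ j, Qh i j * C i j) +
        ∑ j, lamv j * ((∑ i, Qh i j) * Real.log ((∑ i, Qh i j) / β j)))
    (Φ : Set (Matrix (Fin N) (Fin (K + 1)) ℝ))
    (hΦ : Φ = {Qh | (∀ i j, 0 ≤ Qh i j) ∧ (∀ i, ∑ j, Qh i j = 1 / (N : ℝ)) ∧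
        ∑ i, Qh i (Fin.last K) = 1 - ρ})
    (Qhstar : Matrix (Fin N) (Fin (K + 1)) ℝ)
    (hmem : Qhstar ∈ Φ) (hmin : ∀ Qh ∈ Φ, Fhat Qhstar ≤ Fhat Qh)
    (Qstar : Matrix (Fin N) (Fin K) ℝ)
    (hQstar : ∀ i j, Qstar i j = Qhstar i j.castSucc) :
    Qstar ∈ Pi ∧ (∀ Q ∈ Pi, F Qstar ≤ F Q) ∧ F Qstar = Fhat Qhstar := by
  change Pi = partialTransportPolytope (1 / N) ρ at hPi
  change Φ = slackTransportPolytope (1 / N) ρ at hΦ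
  subst hPi hΦ hβ hlamv
  have hmass : Fintype.card (Fin N) * (1 / N : ℝ) = 1 := by
    rw [Fintype.card_fin]
    field_simp
  have hreduce : ∀ Qh ∈ slackTransportPolytope (1 / N) ρ,
      Fhat Qh = F (Qh.submatrix id Fin.castSucc) := fun Qh hQh => by
    rw [hFhat, hF, sum_snoc_mul_mul_log_div_snoc Qh _ _ _ _ hQh.2.2]
    simp only [hC, sum_mul_snoc_zero, Matrix.submatrix_apply, id]
  obtain rfl : Qstar = Qhstar.submatrix id Fin.castSucc := Matrix.ext hQstar
  have hFstar : F (Qhstar.submatrix id Fin.castSucc) = Fhat Qhstar := (hreduce Qhstar hmem).symm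
  refine ⟨submatrix_castSucc_mem_partialTransportPolytope hmass hmem, fun Q hQ => ?_, hFstar⟩
  have hpad := padSlack_mem_slackTransportPolytope hmass hQ
  calc F (Qhstar.submatrix id Fin.castSucc) = Fhat Qhstar := hFstar
    _ ≤ Fhat (padSlack (1 / N) Q) := hmin _ hpad
    _ = F Q := by rw [hreduce _ hpad, submatrix_castSucc_padSlack]

/-- If `Qhstar` minimizes the extended objective `Fhat` over the restricted
extended feasible set `Φ`, then its first `K` columns `Qstar` lie in the P²OT feasible
set `Pi`, minimize `F` over `Pi`, and `F Qstar = Fhat Qhstar`. -/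
theorem stmt_0
    (N K : ℕ) (hN : 0 < N) (hK : 0 < K)
    (ρ lam lamK1 : ℝ) (hρ : ρ ∈ Set.Ioo (0 : ℝ) 1) (hlam : 0 < lam) (hlamK1 : 0 ≤ lamK1)
    (P : Matrix (Fin N) (Fin K) ℝ) (hP : ∀ i j, P i j ∈ Set.Ioc (0 : ℝ) 1)
    (Pi : Set (Matrix (Fin N) (Fin K) ℝ))
    (hPi : Pi = {Q | (∀ i j, 0 ≤ Q i j) ∧ (∀ i, ∑ j, Q i j ≤ 1 / (N : ℝ)) ∧
        ∑ i, ∑ j, Q i j = ρ})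
    (F : Matrix (Fin N) (Fin K) ℝ → ℝ)
    (hF : ∀ Q, F Q = (∑ i, ∑ j, Q i j * (-Real.log (P i j))) +
        lam * ∑ j, (∑ i, Q i j) * Real.log ((∑ i, Q i j) / (ρ / (K : ℝ))))
    (C : Matrix (Fin N) (Fin (K + 1)) ℝ)
    (hC : ∀ i, C i = Fin.snoc (fun j => -Real.log (P i j)) 0)
    (β : Fin (K + 1) → ℝ) (hβ : β = Fin.snoc (fun _ => ρ / (K : ℝ)) (1 - ρ))
    (lamv : Fin (K + 1) → ℝ) (hlamv : lamv = Fin.snoc (fun _ => lam) lamK1)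
    (Fhat : Matrix (Fin N) (Fin (K + 1)) ℝ → ℝ)
    (hFhat : ∀ Qh, Fhat Qh = (∑ i, ∑ j, Qh i j * C i j) +
        ∑ j, lamv j * ((∑ i, Qh i j) * Real.log ((∑ i, Qh i j) / β j)))
    (Φ : Set (Matrix (Fin N) (Fin (K + 1)) ℝ))
    (hΦ : Φ = {Qh | (∀ i j, 0 ≤ Qh i j) ∧ (∀ i, ∑ j, Qh i j = 1 / (N : ℝ)) ∧
        ∑ i, Qh i (Fin.last K) = 1 - ρ})
    (Qhstar : Matrix (Fin N) (Fin (K + 1)) ℝ)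
    (hmem : Qhstar ∈ Φ) (hmin : ∀ Qh ∈ Φ, Fhat Qhstar ≤ Fhat Qh)
    (Qstar : Matrix (Fin N) (Fin K) ℝ)
    (hQstar : ∀ i j, Qstar i j = Qhstar i j.castSucc) :
    Qstar ∈ Pi ∧ (∀ Q ∈ Pi, F Qstar ≤ F Q) ∧ F Qstar = Fhat Qhstar :=
  stmt_0_general N K hN ρ lam lamK1 P Pi hPi F hF C hC β hβ lamv hlamv Fhat hFhat Φ hΦ Qhstar hmem
    hmin Qstar hQstar
end

section
/- Let Q* ∈ Π be a minimizer of F over Π, and define ξ ∈ ℝ^N by ξ_i = 1/N − Σ_{j=1}^K Q*_{ij}. Then the N×(K+1) matrix Q̂† = [Q*, ξ] obtained by appending ξ as a last column lies in Φ_ρ and minimizes F̂ over Φ_ρ, with F̂(Q̂†) = F(Q*). -/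
/-!
Removing the slack column is a bijection from `Φ_ρ` onto `Π`, inverse to appending the row
slacks `1/N - ∑ⱼ Qᵢⱼ`. Along it the transport costs agree because the slack column costs
nothing, and the marginal penalties agree because the slack column has mass exactly
`1 - ρ = β_{K+1}`, so its entropy term is `λ_{K+1} (1 - ρ) log 1 = 0`. Hence `F̂` on `Φ_ρ` is `F`
on `Π` in disguise, and the appended minimizer of `F` minimizes `F̂`.
-/

open Finset

namespace PartialOT

variable {N K : ℕ}

def partialPlans (r : Fin N → ℝ) (ρ : ℝ) : Set (Matrix (Fin N) (Fin K) ℝ) :=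
  {Q | (∀ i j, 0 ≤ Q i j) ∧ (∀ i, ∑ j, Q i j ≤ r i) ∧ ∑ i, ∑ j, Q i j = ρ}

def slackPlans (r : Fin N → ℝ) (s : ℝ) : Set (Matrix (Fin N) (Fin (K + 1)) ℝ) :=
  {Qh | (∀ i j, 0 ≤ Qh i j) ∧ (∀ i, ∑ j, Qh i j = r i) ∧ ∑ i, Qh i (Fin.last K) = s}

def appendSlack (r : Fin N → ℝ) (Q : Matrix (Fin N) (Fin K) ℝ) :
    Matrix (Fin N) (Fin (K + 1)) ℝ :=
  Matrix.of fun i => Fin.snoc (Q i) (r i - ∑ j, Q i j)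

def dropLastCol (Qh : Matrix (Fin N) (Fin (K + 1)) ℝ) : Matrix (Fin N) (Fin K) ℝ :=
  Qh.submatrix id Fin.castSucc

@[simp]
lemma dropLastCol_appendSlack (r : Fin N → ℝ) (Q : Matrix (Fin N) (Fin K) ℝ) :
    dropLastCol (appendSlack r Q) = Q := by
  ext i j
  simp [dropLastCol, appendSlack]

lemma appendSlack_mem_slackPlans {r : Fin N → ℝ} {ρ : ℝ} {Q : Matrix (Fin N) (Fin K) ℝ}
    (hQ : Q ∈ partialPlans r ρ) : appendSlack r Q ∈ slackPlans r (∑ i, r i - ρ) := by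
  obtain ⟨hnonneg, hrow, htotal⟩ := hQ
  refine ⟨fun i j => ?_, fun i => ?_, ?_⟩
  · induction j using Fin.lastCases with
    | last => simpa [appendSlack] using hrow i
    | cast j => simpa [appendSlack] using hnonneg i j
  · simp [appendSlack]
  · simp [appendSlack, sum_sub_distrib, htotal]

lemma dropLastCol_mem_partialPlans {r : Fin N → ℝ} {ρ : ℝ}
    {Qh : Matrix (Fin N) (Fin (K + 1)) ℝ} (hQh : Qh ∈ slackPlans r (∑ i, r i - ρ)) :
    dropLastCol Qh ∈ partialPlans r ρ := by
  obtain ⟨hnonneg, hrow, hlast⟩ := hQh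
  have hrow_drop : ∀ i, ∑ j, dropLastCol Qh i j = r i - Qh i (Fin.last K) := fun i => by
    rw [← hrow i, Fin.sum_univ_castSucc]
    simp [dropLastCol]
  refine ⟨fun i j => hnonneg i _, fun i => ?_, ?_⟩
  · linarith [hrow_drop i, hnonneg i (Fin.last K)]
  · rw [sum_congr rfl fun i _ => hrow_drop i, sum_sub_distrib, hlast]
    ring

lemma sum_sum_mul_of_snoc_zero (Qh : Matrix (Fin N) (Fin (K + 1)) ℝ)
    {c : Matrix (Fin N) (Fin K) ℝ} {C : Matrix (Fin N) (Fin (K + 1)) ℝ}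
    (hC : ∀ i, C i = Fin.snoc (c i) 0) :
    ∑ i, ∑ j, Qh i j * C i j = ∑ i, ∑ j, dropLastCol Qh i j * c i j := by
  refine sum_congr rfl fun i _ => ?_
  simp [Fin.sum_univ_castSucc, dropLastCol, hC i]

lemma sum_snoc_mul_mul_log_div_snoc (lam : Fin K → ℝ) (lamLast : ℝ) (b : Fin K → ℝ) {s : ℝ}
    (hs : s ≠ 0) (m : Fin (K + 1) → ℝ) (hm : m (Fin.last K) = s) :
    ∑ j, (Fin.snoc lam lamLast : Fin (K + 1) → ℝ) j *
        (m j * Real.log (m j / (Fin.snoc b s : Fin (K + 1) → ℝ) j)) =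
      ∑ j : Fin K, lam j * (m j.castSucc * Real.log (m j.castSucc / b j)) := by
  simp [Fin.sum_univ_castSucc, hm, hs]

end PartialOT

open PartialOT

theorem stmt_1_general
    (N K : ℕ) (hN : 0 < N)
    (ρ lam lamK1 : ℝ) (hρ : ρ ∈ Set.Ioo (0 : ℝ) 1)
    (P : Matrix (Fin N) (Fin K) ℝ)
    (Pi : Set (Matrix (Fin N) (Fin K) ℝ))
    (hPi : Pi = {Q | (∀ i j, 0 ≤ Q i j) ∧ (∀ i, ∑ j, Q i j ≤ 1 / (N : ℝ)) ∧
        ∑ i, ∑ j, Q i j = ρ})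
    (F : Matrix (Fin N) (Fin K) ℝ → ℝ)
    (hF : ∀ Q, F Q = (∑ i, ∑ j, Q i j * (-Real.log (P i j))) +
        lam * ∑ j, (∑ i, Q i j) * Real.log ((∑ i, Q i j) / (ρ / (K : ℝ))))
    (C : Matrix (Fin N) (Fin (K + 1)) ℝ)
    (hC : ∀ i, C i = Fin.snoc (fun j => -Real.log (P i j)) 0)
    (β : Fin (K + 1) → ℝ) (hβ : β = Fin.snoc (fun _ => ρ / (K : ℝ)) (1 - ρ))
    (lamv : Fin (K + 1) → ℝ) (hlamv : lamv = Fin.snoc (fun _ => lam) lamK1)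
    (Fhat : Matrix (Fin N) (Fin (K + 1)) ℝ → ℝ)
    (hFhat : ∀ Qh, Fhat Qh = (∑ i, ∑ j, Qh i j * C i j) +
        ∑ j, lamv j * ((∑ i, Qh i j) * Real.log ((∑ i, Qh i j) / β j)))
    (Φ : Set (Matrix (Fin N) (Fin (K + 1)) ℝ))
    (hΦ : Φ = {Qh | (∀ i j, 0 ≤ Qh i j) ∧ (∀ i, ∑ j, Qh i j = 1 / (N : ℝ)) ∧
        ∑ i, Qh i (Fin.last K) = 1 - ρ})
    (Qstar : Matrix (Fin N) (Fin K) ℝ)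
    (hmem : Qstar ∈ Pi) (hmin : ∀ Q ∈ Pi, F Qstar ≤ F Q)
    (ξ : Fin N → ℝ) (hξ : ∀ i, ξ i = 1 / (N : ℝ) - ∑ j, Qstar i j)
    (Qhat : Matrix (Fin N) (Fin (K + 1)) ℝ)
    (hQhat : ∀ i, Qhat i = Fin.snoc (Qstar i) (ξ i)) :
    Qhat ∈ Φ ∧ (∀ Qh ∈ Φ, Fhat Qhat ≤ Fhat Qh) ∧ Fhat Qhat = F Qstar := by
  set r : Fin N → ℝ := fun _ => 1 / (N : ℝ)
  have hr : ∑ i, r i = 1 := by simp [r, Nat.cast_ne_zero.mpr hN.ne']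
  have hPi' : Pi = partialPlans r ρ := hPi
  have hΦ' : Φ = slackPlans r (∑ i, r i - ρ) := by rw [hΦ, hr]; rfl
  have hQhat' : Qhat = appendSlack r Qstar := by
    ext i j
    simp [appendSlack, hQhat i, hξ i, r]
  have hFhat_eq : ∀ Qh ∈ Φ, Fhat Qh = F (dropLastCol Qh) := by
    intro Qh hQh
    obtain ⟨-, -, hlast⟩ := hΦ ▸ hQh
    rw [hFhat, hF, hβ, hlamv, sum_sum_mul_of_snoc_zero Qh hC, mul_sum,
      sum_snoc_mul_mul_log_div_snoc _ _ _ (sub_ne_zero.mpr hρ.2.ne') _ hlast]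
    rfl
  have hQhat_mem : Qhat ∈ Φ := hQhat' ▸ hΦ' ▸ appendSlack_mem_slackPlans (hPi' ▸ hmem)
  have hvalue : Fhat Qhat = F Qstar := by
    rw [hFhat_eq Qhat hQhat_mem, hQhat', dropLastCol_appendSlack]
  refine ⟨hQhat_mem, fun Qh hQh => ?_, hvalue⟩
  rw [hvalue, hFhat_eq Qh hQh]
  exact hmin _ (hPi' ▸ dropLastCol_mem_partialPlans (hΦ' ▸ hQh))

/-- If `Qstar` minimizes `F` over `Pi` and `ξ i = 1/N - ∑ j, Qstar i j`,
then the extended matrix `Qhat = [Qstar, ξ]` lies in `Φ`, minimizes `Fhat` over `Φ`,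
and `Fhat Qhat = F Qstar`. -/
theorem stmt_1
    (N K : ℕ) (hN : 0 < N) (hK : 0 < K)
    (ρ lam lamK1 : ℝ) (hρ : ρ ∈ Set.Ioo (0 : ℝ) 1) (hlam : 0 < lam) (hlamK1 : 0 ≤ lamK1)
    (P : Matrix (Fin N) (Fin K) ℝ) (hP : ∀ i j, P i j ∈ Set.Ioc (0 : ℝ) 1)
    (Pi : Set (Matrix (Fin N) (Fin K) ℝ))
    (hPi : Pi = {Q | (∀ i j, 0 ≤ Q i j) ∧ (∀ i, ∑ j, Q i j ≤ 1 / (N : ℝ)) ∧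
        ∑ i, ∑ j, Q i j = ρ})
    (F : Matrix (Fin N) (Fin K) ℝ → ℝ)
    (hF : ∀ Q, F Q = (∑ i, ∑ j, Q i j * (-Real.log (P i j))) +
        lam * ∑ j, (∑ i, Q i j) * Real.log ((∑ i, Q i j) / (ρ / (K : ℝ))))
    (C : Matrix (Fin N) (Fin (K + 1)) ℝ)
    (hC : ∀ i, C i = Fin.snoc (fun j => -Real.log (P i j)) 0)
    (β : Fin (K + 1) → ℝ) (hβ : β = Fin.snoc (fun _ => ρ / (K : ℝ)) (1 - ρ))
    (lamv : Fin (K + 1) → ℝ) (hlamv : lamv = Fin.snoc (fun _ => lam) lamK1)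
    (Fhat : Matrix (Fin N) (Fin (K + 1)) ℝ → ℝ)
    (hFhat : ∀ Qh, Fhat Qh = (∑ i, ∑ j, Qh i j * C i j) +
        ∑ j, lamv j * ((∑ i, Qh i j) * Real.log ((∑ i, Qh i j) / β j)))
    (Φ : Set (Matrix (Fin N) (Fin (K + 1)) ℝ))
    (hΦ : Φ = {Qh | (∀ i j, 0 ≤ Qh i j) ∧ (∀ i, ∑ j, Qh i j = 1 / (N : ℝ)) ∧
        ∑ i, Qh i (Fin.last K) = 1 - ρ})
    (Qstar : Matrix (Fin N) (Fin K) ℝ)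
    (hmem : Qstar ∈ Pi) (hmin : ∀ Q ∈ Pi, F Qstar ≤ F Q)
    (ξ : Fin N → ℝ) (hξ : ∀ i, ξ i = 1 / (N : ℝ) - ∑ j, Qstar i j)
    (Qhat : Matrix (Fin N) (Fin (K + 1)) ℝ)
    (hQhat : ∀ i, Qhat i = Fin.snoc (Qstar i) (ξ i)) :
    Qhat ∈ Φ ∧ (∀ Qh ∈ Φ, Fhat Qhat ≤ Fhat Qh) ∧ Fhat Qhat = F Qstar :=
  stmt_1_general N K hN ρ lam lamK1 hρ P Pi hPi F hF C hC β hβ lamv hlamv Fhat hFhat Φ hΦ Qstar hmem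
    hmin ξ hξ Qhat hQhat
end

section
/- For every δ > 0 there exists Λ₀ ≥ 0 such that for all Λ ≥ Λ₀: every minimizer Q̂ of G_Λ over Φ satisfies |m̂_{K+1} − (1−ρ)| ≤ δ, where m̂_{K+1} = Σ_{i=1}^N Q̂_{i,K+1} is the mass assigned to the virtual cluster. In other words, as the penalty weight on the virtual cluster tends to +∞, minimizers are forced to assign exactly mass 1−ρ to the virtual cluster. -/
/-! Compare a minimizer `Q` with the reference plan whose column sums are exactly `ρ / K` and
`1 - ρ`: all its penalties vanish, so its objective is a transport cost `B` that does not depend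
on `Λ`. Every term of the objective is nonnegative, hence `Λ · KL(m̂_{K+1} ‖ 1 - ρ) ≤ B`. Since
`m̂_{K+1} ∈ [0, 1]`, compactness bounds the penalty below by some `ε > 0` as soon as
`|m̂_{K+1} - (1 - ρ)| ≥ δ`, and `Λ > B / ε` rules this out. -/

open Real Finset InformationTheory

-- Since `log 0 = 0`, the value at `t = 0` is `c`, as with the convention `0 · log 0 = 0`.
noncomputable def klPenalty (c t : ℝ) : ℝ := t * log (t / c) - t + c

section klPenalty

variable {b c t δ : ℝ}

theorem klPenalty_eq_mul_klFun (hc : c ≠ 0) (t : ℝ) : klPenalty c t = c * klFun (t / c) := by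
  rw [klPenalty, klFun_apply]
  field_simp
  ring

theorem klPenalty_self (c : ℝ) : klPenalty c c = 0 := by
  rcases eq_or_ne c 0 with rfl | hc
  · simp [klPenalty]
  · simp [klPenalty, div_self hc]

theorem klPenalty_nonneg (hc : 0 < c) (ht : 0 ≤ t) : 0 ≤ klPenalty c t := by
  rw [klPenalty_eq_mul_klFun hc.ne']
  exact mul_nonneg hc.le (klFun_nonneg (by positivity))

theorem klPenalty_pos (hc : 0 < c) (ht : 0 ≤ t) (htc : t ≠ c) : 0 < klPenalty c t := by
  refine (klPenalty_nonneg hc ht).lt_of_ne' fun h => htc ?_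
  rw [klPenalty_eq_mul_klFun hc.ne', mul_eq_zero, klFun_eq_zero_iff (by positivity),
    div_eq_one_iff_eq hc.ne'] at h
  exact h.resolve_left hc.ne'

theorem continuous_klPenalty (hc : c ≠ 0) : Continuous (klPenalty c) := by
  rw [funext (klPenalty_eq_mul_klFun hc)]
  fun_prop

theorem exists_pos_le_klPenalty (hc : 0 < c) (hδ : 0 < δ) :
    ∃ ε > 0, ∀ t ∈ Set.Icc 0 b, δ ≤ |t - c| → ε ≤ klPenalty c t := by
  have hcompact : IsCompact (Set.Icc 0 b ∩ {t | δ ≤ |t - c|}) :=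
    isCompact_Icc.inter_right (isClosed_le continuous_const (by fun_prop))
  have hpos : ∀ t ∈ Set.Icc 0 b ∩ {t | δ ≤ |t - c|}, 0 < klPenalty c t := by
    rintro t ⟨ht, hfar : δ ≤ |t - c|⟩
    refine klPenalty_pos hc ht.1 fun htc => ?_
    rw [htc, sub_self, abs_zero] at hfar
    linarith
  obtain ⟨ε, hε, hle⟩ := hcompact.exists_forall_le' (continuous_klPenalty hc.ne').continuousOn hpos
  exact ⟨ε, hε, fun t ht hfar => hle t ⟨ht, hfar⟩⟩

end klPenalty

section Transport

variable {N K : ℕ}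

theorem sum_col_le_one {ι : Type*} [Fintype ι] {Q : Matrix (Fin N) ι ℝ}
    (hQ : ∀ i j, 0 ≤ Q i j) (hrow : ∀ i, ∑ j, Q i j = 1 / (N : ℝ)) (j : ι) :
    ∑ i, Q i j ≤ 1 :=
  calc ∑ i, Q i j ≤ ∑ i, ∑ j, Q i j :=
        sum_le_sum fun i _ => single_le_sum (fun j _ => hQ i j) (mem_univ j)
    _ = N * (1 / N) := by simp [hrow]
    _ ≤ 1 := by rw [mul_one_div]; exact div_self_le_one _

theorem extendedCost_nonneg {P : Matrix (Fin N) (Fin K) ℝ} {C : Matrix (Fin N) (Fin (K + 1)) ℝ}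
    (hP : ∀ i j, P i j ∈ Set.Ioc (0 : ℝ) 1)
    (hC : ∀ i, C i = Fin.snoc (fun j => -log (P i j)) 0) (i : Fin N) (j : Fin (K + 1)) :
    0 ≤ C i j := by
  rw [hC i]
  induction j using Fin.lastCases with
  | last => simp
  | cast j => simpa using log_nonpos (hP i j).1.le (hP i j).2

theorem transportCost_nonneg {Q C : Matrix (Fin N) (Fin (K + 1)) ℝ}
    (hQ : ∀ i j, 0 ≤ Q i j) (hC : ∀ i j, 0 ≤ C i j) : 0 ≤ ∑ i, ∑ j, Q i j * C i j :=
  sum_nonneg fun i _ => sum_nonneg fun j _ => mul_nonneg (hQ i j) (hC i j)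

noncomputable def referencePlan (N K : ℕ) (ρ : ℝ) : Matrix (Fin N) (Fin (K + 1)) ℝ :=
  fun _ => Fin.snoc (fun _ => ρ / K / N) ((1 - ρ) / N)

variable {ρ : ℝ}

theorem referencePlan_nonneg (hρ : ρ ∈ Set.Ioo (0 : ℝ) 1) (i : Fin N) (j : Fin (K + 1)) :
    0 ≤ referencePlan N K ρ i j := by
  obtain ⟨hρ0, hρ1⟩ := hρ
  induction j using Fin.lastCases with
  | last => simp only [referencePlan, Fin.snoc_last]; bound
  | cast j => simp only [referencePlan, Fin.snoc_castSucc]; bound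

theorem sum_referencePlan_row (hK : 0 < K) (i : Fin N) :
    ∑ j, referencePlan N K ρ i j = 1 / (N : ℝ) := by
  have : (K : ℝ) ≠ 0 := by positivity
  simp only [referencePlan, Fin.sum_univ_castSucc, Fin.snoc_castSucc, Fin.snoc_last, sum_const,
    card_univ, Fintype.card_fin, nsmul_eq_mul]
  field_simp
  ring

theorem sum_referencePlan_castSucc (hN : 0 < N) (j : Fin K) :
    ∑ i, referencePlan N K ρ i j.castSucc = ρ / K := by
  have : (N : ℝ) ≠ 0 := by positivity
  simp only [referencePlan, Fin.snoc_castSucc, sum_const, card_univ, Fintype.card_fin,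
    nsmul_eq_mul]
  field_simp

theorem sum_referencePlan_last (hN : 0 < N) :
    ∑ i, referencePlan N K ρ i (Fin.last K) = 1 - ρ := by
  have : (N : ℝ) ≠ 0 := by positivity
  simp only [referencePlan, Fin.snoc_last, sum_const, card_univ, Fintype.card_fin, nsmul_eq_mul]
  field_simp

noncomputable def objective (C : Matrix (Fin N) (Fin (K + 1)) ℝ) (ρ lam Λ : ℝ)
    (Q : Matrix (Fin N) (Fin (K + 1)) ℝ) : ℝ :=
  (∑ i, ∑ j, Q i j * C i j) + lam * ∑ j : Fin K, klPenalty (ρ / K) (∑ i, Q i j.castSucc) +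
    Λ * klPenalty (1 - ρ) (∑ i, Q i (Fin.last K))

variable {C Q : Matrix (Fin N) (Fin (K + 1)) ℝ} {lam : ℝ}

theorem objective_referencePlan (hN : 0 < N) (Λ : ℝ) :
    objective C ρ lam Λ (referencePlan N K ρ) = ∑ i, ∑ j, referencePlan N K ρ i j * C i j := by
  simp only [objective, sum_referencePlan_castSucc hN, sum_referencePlan_last hN, klPenalty_self,
    sum_const_zero, mul_zero, add_zero]

theorem mul_klPenalty_last_le_objective (hρ : 0 < ρ) (hK : 0 < K) (hlam : 0 ≤ lam)
    (hC : ∀ i j, 0 ≤ C i j) (hQ : ∀ i j, 0 ≤ Q i j) (Λ : ℝ) :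
    Λ * klPenalty (1 - ρ) (∑ i, Q i (Fin.last K)) ≤ objective C ρ lam Λ Q := by
  have hclasses : 0 ≤ ∑ j : Fin K, klPenalty (ρ / K) (∑ i, Q i j.castSucc) :=
    sum_nonneg fun j _ => klPenalty_nonneg (by positivity) (sum_nonneg fun i _ => hQ i _)
  have := transportCost_nonneg hQ hC
  unfold objective
  nlinarith

end Transport

/-- For every `δ > 0` there is a penalty threshold `Λ₀ ≥ 0` such that for all
`Λ ≥ Λ₀`, every minimizer of `G Λ` over `Φ` assigns mass within `δ` of `1-ρ` to the
virtual (last) cluster. -/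
theorem stmt_5
    (N K : ℕ) (hN : 0 < N) (hK : 0 < K)
    (ρ lam : ℝ) (hρ : ρ ∈ Set.Ioo (0 : ℝ) 1) (hlam : 0 < lam)
    (P : Matrix (Fin N) (Fin K) ℝ) (hP : ∀ i j, P i j ∈ Set.Ioc (0 : ℝ) 1)
    (C : Matrix (Fin N) (Fin (K + 1)) ℝ)
    (hC : ∀ i, C i = Fin.snoc (fun j => -Real.log (P i j)) 0)
    (Φ : Set (Matrix (Fin N) (Fin (K + 1)) ℝ))
    (hΦ : Φ = {Qh | (∀ i j, 0 ≤ Qh i j) ∧ ∀ i, ∑ j, Qh i j = 1 / (N : ℝ)})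
    (G : ℝ → Matrix (Fin N) (Fin (K + 1)) ℝ → ℝ)
    (hG : ∀ Λ Qh, G Λ Qh = (∑ i, ∑ j, Qh i j * C i j) +
        lam * (∑ j : Fin K, ((∑ i, Qh i j.castSucc) *
            Real.log ((∑ i, Qh i j.castSucc) / (ρ / (K : ℝ))) -
          (∑ i, Qh i j.castSucc) + ρ / (K : ℝ))) +
        Λ * ((∑ i, Qh i (Fin.last K)) *
            Real.log ((∑ i, Qh i (Fin.last K)) / (1 - ρ)) -
          (∑ i, Qh i (Fin.last K)) + (1 - ρ))) :
    ∀ δ > 0, ∃ Λ₀ ≥ (0 : ℝ), ∀ Λ ≥ Λ₀, ∀ Qh ∈ Φ,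
      (∀ Qh' ∈ Φ, G Λ Qh ≤ G Λ Qh') →
      |(∑ i, Qh i (Fin.last K)) - (1 - ρ)| ≤ δ := by
  intro δ hδ
  obtain rfl : G = objective C ρ lam := funext fun Λ => funext fun Q => hG Λ Q
  subst hΦ
  have hCnn := extendedCost_nonneg hP hC
  obtain ⟨ε, hε, hfar_le⟩ := exists_pos_le_klPenalty (b := 1) (sub_pos.2 hρ.2) hδ
  set B := ∑ i, ∑ j, referencePlan N K ρ i j * C i j
  have hB : 0 ≤ B := transportCost_nonneg (referencePlan_nonneg hρ) hCnn
  refine ⟨(B + 1) / ε, by positivity, fun Λ hΛ Q ⟨hQ, hrow⟩ hmin => ?_⟩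
  by_contra! hfar
  have hG_le_B : objective C ρ lam Λ Q ≤ B := by
    simpa only [objective_referencePlan hN] using
      hmin _ ⟨referencePlan_nonneg hρ, sum_referencePlan_row hK⟩
  have hΛkl := mul_klPenalty_last_le_objective hρ.1 hK hlam.le hCnn hQ Λ
  have hkl : ε ≤ klPenalty (1 - ρ) (∑ i, Q i (Fin.last K)) :=
    hfar_le _ ⟨sum_nonneg fun i _ => hQ i _, sum_col_le_one hQ hrow _⟩ hfar.le
  have hΛε : B + 1 ≤ Λ * ε := (div_le_iff₀ hε).1 hΛ
  nlinarith
end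

section
/- Suppose a ∈ ℝ^n and b ∈ ℝ^k have strictly positive entries and satisfy the scaling fixed-point relations a_i = α_i / (M b)_i for every i and b_j = ( β_j / (Mᵀ a)_j )^{f_j} for every j, where f_j = λ_j/(λ_j + ε). Then the matrix Q* defined by Q*_{ij} = a_i · M_{ij} · b_j is the unique minimizer of J over the feasible set Φ_α = {Q ∈ ℝ^{n×k} : Q_{ij} ≥ 0 for all i,j; Σ_{j=1}^k Q_{ij} = α_i for every i}. -/
/-!
The fixed-point relations are exactly the first-order optimality conditions of `J` on `Φ_α`:
with `Q* = diag a · M · diag b`, the partial derivative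
`C i j + ε (log Q*_ij + 1) + λ_j log (m*_j / β_j)` equals `ε (log a_i + 1)`, since the
exponent `f_j = λ_j / (λ_j + ε)` makes `λ_j log (m*_j / β_j) = -ε log b_j`. The gradient is
therefore constant along each row, hence orthogonal to every feasible direction `Q - Q*`
(which has zero row sums). `J` is the sum of a linear term and of the convex functions
`x log x` (in every entry, with weight `ε > 0`) and `m log (m / β) - m + β` (in every column
sum, with weight `λ_j ≥ 0`), each of which lies above its tangent line at a positive point,
strictly so for `x log x`. Summing these tangent-line inequalities gives `J Q* < J Q`.
-/

open Real InformationTheory Finset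

lemma mul_log_sub_tangent_eq {s t : ℝ} (hs : 0 ≤ s) (ht : 0 < t) :
    s * log s - (t * log t + (log t + 1) * (s - t)) = t * klFun (s / t) := by
  rcases hs.eq_or_lt with rfl | hs
  · simp only [zero_div, klFun_zero, log_zero]
    ring
  · rw [klFun_apply, log_div hs.ne' ht.ne']
    field_simp
    ring

lemma mul_log_tangent_le {s t : ℝ} (hs : 0 ≤ s) (ht : 0 < t) :
    t * log t + (log t + 1) * (s - t) ≤ s * log s := by
  linarith [mul_log_sub_tangent_eq hs ht, mul_nonneg ht.le (klFun_nonneg (div_nonneg hs ht.le))]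

lemma mul_log_tangent_lt {s t : ℝ} (hs : 0 ≤ s) (ht : 0 < t) (hst : s ≠ t) :
    t * log t + (log t + 1) * (s - t) < s * log s := by
  have hkl : 0 < klFun (s / t) := (klFun_nonneg (div_nonneg hs ht.le)).lt_of_ne' <| by
    rwa [Ne, klFun_eq_zero_iff (div_nonneg hs ht.le), div_eq_one_iff_eq ht.ne']
  linarith [mul_log_sub_tangent_eq hs ht, mul_pos ht hkl]

lemma mul_log_div_eq (s : ℝ) {β : ℝ} (hβ : β ≠ 0) :
    s * log (s / β) = s * log s - s * log β := by
  rcases eq_or_ne s 0 with rfl | hs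
  · simp
  · rw [log_div hs hβ]; ring

lemma mul_log_div_tangent_le {s t β : ℝ} (hs : 0 ≤ s) (ht : 0 < t) (hβ : 0 < β) :
    t * log (t / β) - t + β + log (t / β) * (s - t) ≤ s * log (s / β) - s + β := by
  rw [mul_log_div_eq s hβ.ne', mul_log_div_eq t hβ.ne', log_div ht.ne' hβ.ne']
  linarith [mul_log_tangent_le hs ht]

lemma sum_sum_lt_sum_sum {ι κ : Type*} [Fintype ι] [Fintype κ] {F G : ι → κ → ℝ}
    (hle : ∀ i j, F i j ≤ G i j) (hlt : ∃ i j, F i j < G i j) :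
    ∑ i, ∑ j, F i j < ∑ i, ∑ j, G i j := by
  obtain ⟨i, j, h⟩ := hlt
  exact sum_lt_sum (fun i _ => sum_le_sum fun j _ => hle i j)
    ⟨i, mem_univ i, sum_lt_sum (fun j _ => hle i j) ⟨j, mem_univ j, h⟩⟩

lemma mul_log_rpow_mul_div {lam ε β t : ℝ} (hlam : 0 ≤ lam) (hε : 0 < ε) (hβ : 0 < β)
    (ht : 0 < t) :
    lam * log ((β / t) ^ (lam / (lam + ε)) * t / β) =
      -ε * log ((β / t) ^ (lam / (lam + ε))) := by
  have hx : 0 < β / t := div_pos hβ ht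
  rw [mul_div_assoc, ← inv_div β t, ← div_eq_mul_inv, log_div (rpow_pos_of_pos hx _).ne' hx.ne',
    log_rpow hx]
  field_simp
  ring

variable {ι κ : Type*} [Fintype ι]

noncomputable def uotObjective [Fintype κ] (C : Matrix ι κ ℝ) (ε : ℝ) (lam β : κ → ℝ)
    (Q : Matrix ι κ ℝ) : ℝ :=
  (∑ i, ∑ j, Q i j * C i j) + ε * (∑ i, ∑ j, Q i j * log (Q i j)) +
    ∑ j, lam j * ((∑ i, Q i j) * log ((∑ i, Q i j) / β j) - (∑ i, Q i j) + β j)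

theorem uotObjective_lt_of_stationary [Fintype κ] [Nonempty ι] {C P Q : Matrix ι κ ℝ} {ε : ℝ}
    {lam β : κ → ℝ} {ν : ι → ℝ} (hε : 0 < ε) (hlam : ∀ j, 0 ≤ lam j) (hβ : ∀ j, 0 < β j)
    (hP : ∀ i j, 0 < P i j) (hQ : ∀ i j, 0 ≤ Q i j) (hrow : ∀ i, ∑ j, Q i j = ∑ j, P i j)
    (hstat : ∀ i j, C i j + ε * (log (P i j) + 1) + lam j * log ((∑ i', P i' j) / β j) = ν i)
    (hne : Q ≠ P) :
    uotObjective C ε lam β P < uotObjective C ε lam β Q := by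
  set L : κ → ℝ := fun j => log ((∑ i, P i j) / β j)
  have hentropy :
      ∑ i, ∑ j, P i j * log (P i j) + ∑ i, ∑ j, (log (P i j) + 1) * (Q i j - P i j) <
        ∑ i, ∑ j, Q i j * log (Q i j) := by
    obtain ⟨i, j, hij⟩ : ∃ i j, Q i j ≠ P i j := by
      by_contra! h
      exact hne (Matrix.ext h)
    simp only [← sum_add_distrib]
    exact sum_sum_lt_sum_sum (fun i j => mul_log_tangent_le (hQ i j) (hP i j))
      ⟨i, j, mul_log_tangent_lt (hQ i j) (hP i j) hij⟩
  have hpenalty :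
      ∑ j, lam j * ((∑ i, P i j) * log ((∑ i, P i j) / β j) - (∑ i, P i j) + β j) +
        ∑ j, lam j * L j * ((∑ i, Q i j) - ∑ i, P i j) ≤
      ∑ j, lam j * ((∑ i, Q i j) * log ((∑ i, Q i j) / β j) - (∑ i, Q i j) + β j) := by
    simp only [← sum_add_distrib, mul_assoc, ← mul_add]
    refine sum_le_sum fun j _ => mul_le_mul_of_nonneg_left ?_ (hlam j)
    exact mul_log_div_tangent_le (sum_nonneg fun i _ => hQ i j)
      (sum_pos (fun i _ => hP i j) univ_nonempty) (hβ j)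
  have hlinear : (∑ i, ∑ j, Q i j * C i j) - (∑ i, ∑ j, P i j * C i j) +
      ε * ∑ i, ∑ j, (log (P i j) + 1) * (Q i j - P i j) +
      ∑ j, lam j * L j * ((∑ i, Q i j) - ∑ i, P i j) = 0 := by
    have hcol : ∑ j, lam j * L j * ((∑ i, Q i j) - ∑ i, P i j) =
        ∑ i, ∑ j, lam j * L j * (Q i j - P i j) := by
      rw [sum_comm]
      simp only [← mul_sum, sum_sub_distrib]
    calc _ = ∑ i, ∑ j, (C i j + ε * (log (P i j) + 1) + lam j * L j) * (Q i j - P i j) := by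
          rw [hcol]
          simp only [mul_sum, ← sum_sub_distrib, ← sum_add_distrib]
          exact sum_congr rfl fun i _ => sum_congr rfl fun j _ => by ring
      _ = ∑ i, ν i * ∑ j, (Q i j - P i j) := by simp only [L, hstat, mul_sum]
      _ = 0 := by simp [sum_sub_distrib, hrow]
  unfold uotObjective
  linarith [mul_lt_mul_of_pos_left hentropy hε]

lemma stationarity_of_scaling_fixedPoint {C M : Matrix ι κ ℝ} {ε : ℝ} {lam β : κ → ℝ}
    {a : ι → ℝ} {b : κ → ℝ}
    (hε : 0 < ε) (hlam : ∀ j, 0 ≤ lam j) (hβ : ∀ j, 0 < β j)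
    (hM : ∀ i j, M i j = exp (-C i j / ε)) (ha : ∀ i, 0 < a i)
    (hT : ∀ j, 0 < ∑ i, M i j * a i)
    (hfixb : ∀ j, b j = (β j / ∑ i, M i j * a i) ^ (lam j / (lam j + ε))) (i : ι) (j : κ) :
    C i j + ε * (log (a i * M i j * b j) + 1) +
      lam j * log ((∑ i', a i' * M i' j * b j) / β j) = ε * (log (a i) + 1) := by
  have hb : 0 < b j := hfixb j ▸ rpow_pos_of_pos (div_pos (hβ j) (hT j)) _
  have hcol : ∑ i', a i' * M i' j * b j = b j * ∑ i', M i' j * a i' := by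
    rw [mul_sum]
    exact sum_congr rfl fun i' _ => by ring
  have hpen := mul_log_rpow_mul_div (hlam j) hε (hβ j) (hT j)
  rw [← hfixb j] at hpen
  rw [hcol, hpen, log_mul (mul_pos (ha i) (hM i j ▸ exp_pos _)).ne' hb.ne',
    log_mul (ha i).ne' (hM i j ▸ exp_pos _).ne', hM i j, log_exp]
  field_simp
  ring

theorem stmt_6_general
    (n k : ℕ) (hn : 0 < n)
    (ε : ℝ) (hε : 0 < ε)
    (C : Matrix (Fin n) (Fin k) ℝ)
    (lam : Fin k → ℝ) (hlam : ∀ j, 0 < lam j)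
    (α : Fin n → ℝ) (hα : ∀ i, 0 < α i)
    (β : Fin k → ℝ) (hβ : ∀ j, 0 < β j)
    (M : Matrix (Fin n) (Fin k) ℝ) (hM : ∀ i j, M i j = Real.exp (-C i j / ε))
    (f : Fin k → ℝ) (hf : ∀ j, f j = lam j / (lam j + ε))
    (a : Fin n → ℝ) (b : Fin k → ℝ)
    (ha : ∀ i, 0 < a i) (hb : ∀ j, 0 < b j)
    (hfixa : ∀ i, a i = α i / (∑ j, M i j * b j))
    (hfixb : ∀ j, b j = (β j / (∑ i, M i j * a i)) ^ (f j))
    (J : Matrix (Fin n) (Fin k) ℝ → ℝ)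
    (hJ : ∀ Q, J Q = (∑ i, ∑ j, Q i j * C i j) +
        ε * (∑ i, ∑ j, Q i j * Real.log (Q i j)) +
        ∑ j, lam j * ((∑ i, Q i j) * Real.log ((∑ i, Q i j) / β j) -
          (∑ i, Q i j) + β j))
    (Qstar : Matrix (Fin n) (Fin k) ℝ)
    (hQstar : ∀ i j, Qstar i j = a i * M i j * b j)
    (Φα : Set (Matrix (Fin n) (Fin k) ℝ))
    (hΦα : Φα = {Q | (∀ i j, 0 ≤ Q i j) ∧ ∀ i, ∑ j, Q i j = α i}) :
    Qstar ∈ Φα ∧ ∀ Q ∈ Φα, Q ≠ Qstar → J Qstar < J Q := by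
  have : Nonempty (Fin n) := ⟨⟨0, hn⟩⟩
  have hMpos : ∀ i j, 0 < M i j := fun i j => hM i j ▸ exp_pos _
  have hQpos : ∀ i j, 0 < Qstar i j := fun i j =>
    hQstar i j ▸ mul_pos (mul_pos (ha i) (hMpos i j)) (hb j)
  have hrow : ∀ i, ∑ j, Qstar i j = α i := fun i => by
    have hS : 0 < ∑ j, M i j * b j := (div_pos_iff_of_pos_left (hα i)).1 (hfixa i ▸ ha i)
    simp only [hQstar, mul_assoc, ← mul_sum]
    rw [hfixa i, div_mul_cancel₀ _ hS.ne']
  have hstat := stationarity_of_scaling_fixedPoint hε (fun j => (hlam j).le) hβ hM ha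
    (fun j => sum_pos (fun i _ => mul_pos (hMpos i j) (ha i)) univ_nonempty)
    (fun j => hf j ▸ hfixb j)
  obtain rfl : J = uotObjective C ε lam β := funext hJ
  subst hΦα
  refine ⟨⟨fun i j => (hQpos i j).le, hrow⟩, fun Q ⟨hQ, hQrow⟩ hne => ?_⟩
  refine uotObjective_lt_of_stationary (ν := fun i => ε * (log (a i) + 1)) hε
    (fun j => (hlam j).le) hβ hQpos hQ (fun i => by rw [hQrow, hrow]) (fun i j => ?_) hne
  simpa only [hQstar] using hstat i j

/-- If positive scaling vectors `a, b` satisfy the scaling fixed-point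
relations, then `Qstar i j = a i * M i j * b j` is the unique minimizer of the entropic
objective `J` (with weighted unnormalized KL column penalties) over the feasible set of
nonnegative matrices with row sums `α`. -/
theorem stmt_6
    (n k : ℕ) (hn : 0 < n) (hk : 0 < k)
    (ε : ℝ) (hε : 0 < ε)
    (C : Matrix (Fin n) (Fin k) ℝ)
    (lam : Fin k → ℝ) (hlam : ∀ j, 0 < lam j)
    (α : Fin n → ℝ) (hα : ∀ i, 0 < α i)
    (β : Fin k → ℝ) (hβ : ∀ j, 0 < β j)
    (M : Matrix (Fin n) (Fin k) ℝ) (hM : ∀ i j, M i j = Real.exp (-C i j / ε))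
    (f : Fin k → ℝ) (hf : ∀ j, f j = lam j / (lam j + ε))
    (a : Fin n → ℝ) (b : Fin k → ℝ)
    (ha : ∀ i, 0 < a i) (hb : ∀ j, 0 < b j)
    (hfixa : ∀ i, a i = α i / (∑ j, M i j * b j))
    (hfixb : ∀ j, b j = (β j / (∑ i, M i j * a i)) ^ (f j))
    (J : Matrix (Fin n) (Fin k) ℝ → ℝ)
    (hJ : ∀ Q, J Q = (∑ i, ∑ j, Q i j * C i j) +
        ε * (∑ i, ∑ j, Q i j * Real.log (Q i j)) +
        ∑ j, lam j * ((∑ i, Q i j) * Real.log ((∑ i, Q i j) / β j) -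
          (∑ i, Q i j) + β j))
    (Qstar : Matrix (Fin n) (Fin k) ℝ)
    (hQstar : ∀ i j, Qstar i j = a i * M i j * b j)
    (Φα : Set (Matrix (Fin n) (Fin k) ℝ))
    (hΦα : Φα = {Q | (∀ i j, 0 ≤ Q i j) ∧ ∀ i, ∑ j, Q i j = α i}) :
    Qstar ∈ Φα ∧ ∀ Q ∈ Φα, Q ≠ Qstar → J Qstar < J Q :=
  stmt_6_general n k hn ε hε C lam hlam α hα β hβ M hM f hf a b ha hb hfixa hfixb J hJ Qstar hQstar
    Φα hΦα
end

section
/- Suppose a ∈ ℝ^n and b ∈ ℝ^k have strictly positive entries and satisfy a_i = α_i / (M b)_i for every i and b_j = ( β_j / (Mᵀ a)_j )^{f_j} for every j, where f_j = λ_j/(λ_j + ε). Then the matrix Q* with Q*_{ij} = a_i · M_{ij} · b_j satisfies: (i) its i-th row sum equals α_i for every i, and (ii) its j-th column sum equals β_j^{f_j} · ((Mᵀ a)_j)^{1 − f_j} for every j (i.e., the column marginals equal the closed-form proximal value of Mᵀa for the weighted KL divergence). -/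
/-! The fixed-point equations say that `a` and `b` are exactly the factors normalising the row
and column sums of `Q*`. Positivity of `a` rules out the junk value `α i / 0` in the row
equation, and makes `(Mᵀ a) j` positive, which the rpow algebra in the column equation needs. -/

theorem mul_eq_of_eq_div_of_ne_zero {G : Type*} [GroupWithZero G] {x y z : G}
    (h : x = y / z) (hx : x ≠ 0) : x * z = y :=
  h ▸ div_mul_cancel₀ y (div_ne_zero_iff.mp (h ▸ hx)).2

theorem Real.div_rpow_mul_self {x y r : ℝ} (hx : 0 ≤ x) (hy : 0 < y) :
    (x / y) ^ r * y = x ^ r * y ^ (1 - r) := by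
  rw [Real.div_rpow hx hy.le, Real.rpow_sub hy, Real.rpow_one]
  ring

section Scaling

variable {ι κ R : Type*} [CommSemiring R]

theorem sum_scaled_row [Fintype κ] (a : ι → R) (M : Matrix ι κ R) (b : κ → R) (i : ι) :
    ∑ j, a i * M i j * b j = a i * ∑ j, M i j * b j := by
  rw [Finset.mul_sum]
  simp only [mul_assoc]

theorem sum_scaled_col [Fintype ι] (a : ι → R) (M : Matrix ι κ R) (b : κ → R) (j : κ) :
    ∑ i, a i * M i j * b j = b j * ∑ i, M i j * a i := by
  rw [Finset.mul_sum]
  exact Finset.sum_congr rfl fun i _ => by ring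

end Scaling

theorem stmt_7_general
    (n k : ℕ) (hn : 0 < n)
    (ε : ℝ)
    (C : Matrix (Fin n) (Fin k) ℝ)
    (α : Fin n → ℝ)
    (β : Fin k → ℝ) (hβ : ∀ j, 0 < β j)
    (M : Matrix (Fin n) (Fin k) ℝ) (hM : ∀ i j, M i j = Real.exp (-C i j / ε))
    (f : Fin k → ℝ)
    (a : Fin n → ℝ) (b : Fin k → ℝ)
    (ha : ∀ i, 0 < a i)
    (hfixa : ∀ i, a i = α i / (∑ j, M i j * b j))
    (hfixb : ∀ j, b j = (β j / (∑ i, M i j * a i)) ^ (f j))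
    (Qstar : Matrix (Fin n) (Fin k) ℝ)
    (hQstar : ∀ i j, Qstar i j = a i * M i j * b j) :
    (∀ i, ∑ j, Qstar i j = α i) ∧
    (∀ j, ∑ i, Qstar i j = β j ^ (f j) * (∑ i, M i j * a i) ^ (1 - f j)) := by
  simp_rw [hQstar]
  refine ⟨fun i => ?_, fun j => ?_⟩
  · rw [sum_scaled_row]
    exact mul_eq_of_eq_div_of_ne_zero (hfixa i) (ha i).ne'
  · have hMa : 0 < ∑ i, M i j * a i :=
      Finset.sum_pos (fun i _ => mul_pos (hM i j ▸ Real.exp_pos _) (ha i))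
        ⟨⟨0, hn⟩, Finset.mem_univ _⟩
    rw [sum_scaled_col, hfixb j]
    exact Real.div_rpow_mul_self (hβ j).le hMa

/-- If positive scaling vectors `a, b` satisfy the scaling fixed-point
relations, then `Qstar i j = a i * M i j * b j` has row sums `α i` and column sums
`β j ^ f j * ((Mᵀ a) j) ^ (1 - f j)`. -/
theorem stmt_7
    (n k : ℕ) (hn : 0 < n) (hk : 0 < k)
    (ε : ℝ) (hε : 0 < ε)
    (C : Matrix (Fin n) (Fin k) ℝ)
    (lam : Fin k → ℝ) (hlam : ∀ j, 0 < lam j)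
    (α : Fin n → ℝ) (hα : ∀ i, 0 < α i)
    (β : Fin k → ℝ) (hβ : ∀ j, 0 < β j)
    (M : Matrix (Fin n) (Fin k) ℝ) (hM : ∀ i j, M i j = Real.exp (-C i j / ε))
    (f : Fin k → ℝ) (hf : ∀ j, f j = lam j / (lam j + ε))
    (a : Fin n → ℝ) (b : Fin k → ℝ)
    (ha : ∀ i, 0 < a i) (hb : ∀ j, 0 < b j)
    (hfixa : ∀ i, a i = α i / (∑ j, M i j * b j))
    (hfixb : ∀ j, b j = (β j / (∑ i, M i j * a i)) ^ (f j))
    (Qstar : Matrix (Fin n) (Fin k) ℝ)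
    (hQstar : ∀ i j, Qstar i j = a i * M i j * b j) :
    (∀ i, ∑ j, Qstar i j = α i) ∧
    (∀ j, ∑ i, Qstar i j = β j ^ (f j) * (∑ i, M i j * a i) ^ (1 - f j)) :=
  stmt_7_general n k hn ε C α β hβ M hM f a b ha hfixa hfixb Qstar hQstar
end

section
/- The function h attains its minimum over {x ∈ ℝ^k : x_j ≥ 0 for all j} at the unique point x* with x*_j = β_j^{λ_j/(λ_j+ε)} · z_j^{ε/(λ_j+ε)} for every j; that is, the proximal operator of the weighted unnormalized KL divergence with respect to the unnormalized KL divergence is given in closed form by x*_j = β_j^{f_j} z_j^{1−f_j} with f_j = λ_j/(λ_j+ε). -/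
open scoped BigOperators

/-!
Write `D(x ‖ a) = x log (x / a) - x + a` for the unnormalized KL divergence. Since
`(λ + ε) log x* = λ log β + ε log z`, the objective splits coordinatewise as the "three-point
identity" `λ D(x ‖ β) + ε D(x ‖ z) = (λ + ε) D(x ‖ x*) + (λ D(x* ‖ β) + ε D(x* ‖ z))`,
so `h x - h x* = ∑ⱼ (λⱼ + ε) D(xⱼ ‖ x*ⱼ)`, which is nonnegative and vanishes only at `x = x*`.
-/

open Real InformationTheory

/-- The unnormalized KL divergence `D(x ‖ a)`; the convention `0 log 0 = 0` is built into `Real.log`. -/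
noncomputable def unnormKL (x a : ℝ) : ℝ := x * log (x / a) - x + a

lemma unnormKL_eq_mul_klFun {a : ℝ} (ha : 0 < a) (x : ℝ) :
    unnormKL x a = a * klFun (x / a) := by
  rw [unnormKL, klFun_apply]
  field_simp
  ring

lemma unnormKL_nonneg {x a : ℝ} (ha : 0 < a) (hx : 0 ≤ x) : 0 ≤ unnormKL x a := by
  rw [unnormKL_eq_mul_klFun ha]
  exact mul_nonneg ha.le (klFun_nonneg (div_nonneg hx ha.le))

lemma unnormKL_eq_zero_iff {x a : ℝ} (ha : 0 < a) (hx : 0 ≤ x) : unnormKL x a = 0 ↔ x = a := by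
  rw [unnormKL_eq_mul_klFun ha, mul_eq_zero, klFun_eq_zero_iff (div_nonneg hx ha.le),
    div_eq_one_iff_eq ha.ne']
  simp [ha.ne']

lemma mul_unnormKL_add_mul_unnormKL {L e b c t : ℝ} (hb : 0 < b) (hc : 0 < c) (ht : 0 < t)
    (hlog : (L + e) * log t = L * log b + e * log c) (x : ℝ) :
    L * unnormKL x b + e * unnormKL x c
      = (L + e) * unnormKL x t + (L * unnormKL t b + e * unnormKL t c) := by
  simp only [unnormKL]
  rw [log_div ht.ne' hb.ne', log_div ht.ne' hc.ne']
  rcases eq_or_ne x 0 with rfl | hx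
  · simp only [zero_mul]
    linear_combination (-t) * hlog
  · rw [log_div hx hb.ne', log_div hx hc.ne', log_div hx ht.ne']
    linear_combination (x - t) * hlog

lemma mul_log_rpow_mul_rpow {L e b c : ℝ} (hb : 0 < b) (hc : 0 < c) (hLe : L + e ≠ 0) :
    (L + e) * log (b ^ (L / (L + e)) * c ^ (e / (L + e))) = L * log b + e * log c := by
  rw [log_mul (rpow_pos_of_pos hb _).ne' (rpow_pos_of_pos hc _).ne', log_rpow hb, log_rpow hc]
  field_simp

section WeightedSum

variable {ι : Type*} [Fintype ι] {w x t : ι → ℝ}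

lemma sum_mul_unnormKL_nonneg (hw : ∀ i, 0 < w i) (ht : ∀ i, 0 < t i) (hx : ∀ i, 0 ≤ x i) :
    0 ≤ ∑ i, w i * unnormKL (x i) (t i) :=
  Finset.sum_nonneg fun i _ => mul_nonneg (hw i).le (unnormKL_nonneg (ht i) (hx i))

lemma sum_mul_unnormKL_eq_zero_iff (hw : ∀ i, 0 < w i) (ht : ∀ i, 0 < t i)
    (hx : ∀ i, 0 ≤ x i) : ∑ i, w i * unnormKL (x i) (t i) = 0 ↔ x = t := by
  rw [Finset.sum_eq_zero_iff_of_nonneg fun i _ =>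
    mul_nonneg (hw i).le (unnormKL_nonneg (ht i) (hx i)), funext_iff]
  simp only [Finset.mem_univ, true_implies, mul_eq_zero, (hw _).ne', false_or,
    unnormKL_eq_zero_iff (ht _) (hx _)]

end WeightedSum

theorem stmt_8_general
    (k : ℕ)
    (ε : ℝ) (hε : 0 < ε)
    (lam β z : Fin k → ℝ)
    (hlam : ∀ j, 0 < lam j) (hβ : ∀ j, 0 < β j) (hz : ∀ j, 0 < z j)
    (h : (Fin k → ℝ) → ℝ)
    (hh : ∀ x, h x = ∑ j, (lam j * (x j * Real.log (x j / β j) - x j + β j) +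
        ε * (x j * Real.log (x j / z j) - x j + z j)))
    (xstar : Fin k → ℝ)
    (hxstar : ∀ j, xstar j = β j ^ (lam j / (lam j + ε)) * z j ^ (ε / (lam j + ε))) :
    (∀ x, (∀ j, 0 ≤ x j) → h xstar ≤ h x) ∧
    (∀ x, (∀ j, 0 ≤ x j) → h x = h xstar → x = xstar) := by
  have hw : ∀ j, 0 < lam j + ε := fun j => add_pos (hlam j) hε
  have hxstar_pos : ∀ j, 0 < xstar j := fun j => hxstar j ▸
    mul_pos (rpow_pos_of_pos (hβ j) _) (rpow_pos_of_pos (hz j) _)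
  have hsplit : ∀ x, h x = ∑ j, (lam j + ε) * unnormKL (x j) (xstar j) + h xstar := by
    intro x
    simp only [hh, ← Finset.sum_add_distrib]
    refine Finset.sum_congr rfl fun j _ => mul_unnormKL_add_mul_unnormKL (hβ j) (hz j)
      (hxstar_pos j) ?_ (x j)
    rw [hxstar j]
    exact mul_log_rpow_mul_rpow (hβ j) (hz j) (hw j).ne'
  refine ⟨fun x hx => ?_, fun x hx hx_eq => ?_⟩
  · linarith [hsplit x, sum_mul_unnormKL_nonneg hw hxstar_pos hx]
  · rw [← sum_mul_unnormKL_eq_zero_iff hw hxstar_pos hx]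
    linarith [hsplit x]

/-- The weighted-KL proximal objective `h` attains its minimum over the
nonnegative orthant at the unique point `xstar j = β j ^ (λ j/(λ j+ε)) * z j ^ (ε/(λ j+ε))`. -/
theorem stmt_8
    (k : ℕ) (hk : 0 < k)
    (ε : ℝ) (hε : 0 < ε)
    (lam β z : Fin k → ℝ)
    (hlam : ∀ j, 0 < lam j) (hβ : ∀ j, 0 < β j) (hz : ∀ j, 0 < z j)
    (h : (Fin k → ℝ) → ℝ)
    (hh : ∀ x, h x = ∑ j, (lam j * (x j * Real.log (x j / β j) - x j + β j) +
        ε * (x j * Real.log (x j / z j) - x j + z j)))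
    (xstar : Fin k → ℝ)
    (hxstar : ∀ j, xstar j = β j ^ (lam j / (lam j + ε)) * z j ^ (ε / (lam j + ε))) :
    (∀ x, (∀ j, 0 ≤ x j) → h xstar ≤ h x) ∧
    (∀ x, (∀ j, 0 ≤ x j) → h x = h xstar → x = xstar) :=
  stmt_8_general k ε hε lam β z hlam hβ hz h hh xstar hxstar
end
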